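/- arXiv:2004.00233 — 2 statements merged into one kernel-verified Lean document; each statement's English description precedes it below -/
import Mathlib

section
/- For positive integers n and m, write e(n) for the largest power of 2 dividing n. Then gcd(x^n + 1, x^m - 1) in Z[x] equals x^{gcd(n, m/2)} + 1 if e(m) ≥ 2·e(n), and equals 1 otherwise. -/
open Polynomial

/-!
A common divisor `d` of `x ^ n + 1` and `x ^ m - 1` divides `x ^ (2 * n) - 1`, hence
`x ^ gcd(2n, m) - 1`. When `2` is invertible, `x ^ n + 1` and `x ^ n - 1` are coprime, so `d` is a
unit as soon as `gcd(2n, m) ∣ n`, which is the case `e(m) ≤ e(n)`. Otherwise `m = 2m'` and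
`g = gcd(n, m')` has `n / g` odd, so `x ^ g + 1` divides both polynomials, while `d` divides
`x ^ (2g) - 1 = (x ^ g + 1)(x ^ g - 1)` and is coprime to `x ^ g - 1 ∣ x ^ n - 1`.
-/

section CommRing

variable {R : Type*} [CommRing R] (x : R)

theorem pow_sub_one_dvd_pow_sub_one_of_dvd {a b : ℕ} (h : a ∣ b) : x ^ a - 1 ∣ x ^ b - 1 := by
  obtain ⟨k, rfl⟩ := h
  simpa [pow_mul] using sub_dvd_pow_sub_pow (x ^ a) 1 k

theorem dvd_pow_gcd_sub_one {d : R} {a b : ℕ} (ha : d ∣ x ^ a - 1) (hb : d ∣ x ^ b - 1) :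
    d ∣ x ^ a.gcd b - 1 := by
  induction a, b using Nat.gcd.induction with
  | H0 b => simpa using hb
  | H1 a b _ ih =>
    rw [Nat.gcd_rec]
    refine ih ?_ ha
    have hb' : x ^ b - 1 = x ^ (b % a) * (x ^ (a * (b / a)) - 1) + (x ^ (b % a) - 1) := by
      conv_lhs => rw [← Nat.div_add_mod b a, pow_add]
      ring
    rw [hb'] at hb
    exact (dvd_add_right (dvd_mul_of_dvd_right
      (ha.trans (pow_sub_one_dvd_pow_sub_one_of_dvd x (dvd_mul_right a _))) _)).mp hb

theorem pow_add_one_dvd_pow_mul_add_one {k : ℕ} (a : ℕ) (hk : Odd k) :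
    x ^ a + 1 ∣ x ^ (a * k) + 1 := by
  simpa [pow_mul] using hk.add_dvd_pow_add_pow (x ^ a) 1

theorem pow_add_one_dvd_pow_sub_one {a b : ℕ} (h : 2 * a ∣ b) : x ^ a + 1 ∣ x ^ b - 1 :=
  (Dvd.intro (x ^ a - 1) (by ring) : x ^ a + 1 ∣ x ^ (2 * a) - 1).trans
    (pow_sub_one_dvd_pow_sub_one_of_dvd x h)

theorem isCoprime_add_one_sub_one (h2 : IsUnit (2 : R)) : IsCoprime (x + 1) (x - 1) :=
  ⟨↑h2.unit⁻¹, -↑h2.unit⁻¹, by linear_combination h2.val_inv_mul⟩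

theorem dvd_pow_gcd_two_mul_sub_one {d : R} {n m : ℕ} (hn : d ∣ x ^ n + 1)
    (hm : d ∣ x ^ m - 1) :
    d ∣ x ^ (2 * n).gcd m - 1 :=
  dvd_pow_gcd_sub_one x (hn.trans (pow_add_one_dvd_pow_sub_one x dvd_rfl)) hm

theorem isUnit_of_dvd_pow_add_one_of_dvd_pow_sub_one (h2 : IsUnit (2 : R)) {d : R} {n m : ℕ}
    (hn : d ∣ x ^ n + 1) (hm : d ∣ x ^ m - 1) (h : (2 * n).gcd m ∣ n) : IsUnit d :=
  (isCoprime_add_one_sub_one (x ^ n) h2).isUnit_of_dvd' hn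
    ((dvd_pow_gcd_two_mul_sub_one x hn hm).trans (pow_sub_one_dvd_pow_sub_one_of_dvd x h))

end CommRing

section GCDMonoid

variable {R : Type*} [CommRing R] [IsDomain R] [GCDMonoid R] {x : R}

theorem associated_gcd_pow_add_one_pow_two_mul_sub_one (h2 : IsUnit (2 : R)) {n m : ℕ}
    (hodd : Odd (n / n.gcd m)) :
    Associated (gcd (x ^ n + 1) (x ^ (2 * m) - 1)) (x ^ n.gcd m + 1) := by
  set g := n.gcd m
  refine associated_of_dvd_dvd ?_ (dvd_gcd ?_ ?_)
  · have hd : gcd (x ^ n + 1) (x ^ (2 * m) - 1) ∣ x ^ (2 * n).gcd (2 * m) - 1 :=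
      dvd_pow_gcd_two_mul_sub_one x (gcd_dvd_left _ _) (gcd_dvd_right _ _)
    rw [Nat.gcd_mul_left, show x ^ (2 * g) - 1 = (x ^ g + 1) * (x ^ g - 1) by ring] at hd
    have hcop : IsCoprime (gcd (x ^ n + 1) (x ^ (2 * m) - 1)) (x ^ g - 1) :=
      ((isCoprime_add_one_sub_one (x ^ n) h2).of_isCoprime_of_dvd_left
        (gcd_dvd_left _ _)).of_isCoprime_of_dvd_right
          (pow_sub_one_dvd_pow_sub_one_of_dvd x (Nat.gcd_dvd_left n m))
    exact hcop.dvd_of_dvd_mul_right hd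
  · have h := pow_add_one_dvd_pow_mul_add_one x g hodd
    rwa [Nat.mul_div_cancel' (Nat.gcd_dvd_left n m)] at h
  · exact pow_add_one_dvd_pow_sub_one x (mul_dvd_mul_left 2 (Nat.gcd_dvd_right n m))

end GCDMonoid

theorem Nat.odd_div_gcd_of_factorization_two_le {n m : ℕ} (hn : n ≠ 0)
    (h : n.factorization 2 ≤ m.factorization 2) : Odd (n / n.gcd m) := by
  have h2n : 2 ^ n.factorization 2 ∣ n.gcd m :=
    Nat.dvd_gcd (Nat.ordProj_dvd n 2) ((pow_dvd_pow 2 h).trans (Nat.ordProj_dvd m 2))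
  exact (Nat.coprime_two_left.mp (Nat.coprime_ordCompl Nat.prime_two hn)).of_dvd_nat
    (Nat.div_dvd_div_left (Nat.gcd_dvd_left n m) h2n)

theorem Nat.gcd_two_mul_dvd_of_factorization_two_le {n m : ℕ} (hn : n ≠ 0) (hm : m ≠ 0)
    (h : m.factorization 2 ≤ n.factorization 2) : (2 * n).gcd m ∣ n := by
  rw [← Nat.factorization_le_iff_dvd (Nat.gcd_ne_zero_right hm) hn,
    Nat.factorization_gcd (mul_ne_zero two_ne_zero hn) hm,
    Nat.factorization_mul two_ne_zero hn, Nat.prime_two.factorization]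
  intro p
  simp only [Finsupp.inf_apply, Finsupp.add_apply, Finsupp.single_apply]
  split_ifs with hp
  · subst hp; omega
  · omega

theorem stmt_4 (n m : ℕ) (hn : 0 < n) (hm : 0 < m) :
    gcd ((X : ℚ[X]) ^ n + 1) ((X : ℚ[X]) ^ m - 1) =
      if 2 * 2 ^ (n.factorization 2) ≤ 2 ^ (m.factorization 2) then
        (X : ℚ[X]) ^ (Nat.gcd n (m / 2)) + 1
      else 1 := by
  have h2 : IsUnit (2 : ℚ[X]) := (IsUnit.mk0 (2 : ℚ) two_ne_zero).map C
  split_ifs with h <;> rw [← pow_succ', Nat.pow_le_pow_iff_right one_lt_two] at h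
  · obtain ⟨m, rfl⟩ : 2 ∣ m :=
      (Nat.prime_two.dvd_iff_one_le_factorization hm.ne').2 (by omega)
    have hm2 : (2 * m).factorization 2 = m.factorization 2 + 1 := by
      rw [Nat.factorization_mul two_ne_zero (by omega), Nat.prime_two.factorization]
      simp [add_comm]
    have hmonic : ((X : ℚ[X]) ^ n.gcd m + 1).Monic := by
      simpa using monic_X_pow_add_C (1 : ℚ) (Nat.gcd_pos_of_pos_left m hn).ne'
    rw [Nat.mul_div_cancel_left m two_pos]
    exact (associated_gcd_pow_add_one_pow_two_mul_sub_one h2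
      (Nat.odd_div_gcd_of_factorization_two_le hn.ne' (by omega))).eq_of_normalized
      (normalize_gcd _ _) hmonic.normalize_eq_self
  · rw [← normalize_gcd, normalize_eq_one]
    exact isUnit_of_dvd_pow_add_one_of_dvd_pow_sub_one X h2 (gcd_dvd_left _ _)
      (gcd_dvd_right _ _) (Nat.gcd_two_mul_dvd_of_factorization_two_le hn.ne' hm.ne' (by omega))
end

section
/- Let f(x) = a_{n_r}x^{n_r} + ... + a_{n_1}x^{n_1} + εp^u where p is prime, u ≥ 2, ε = ±1, n_1 = 1, p does not divide a_{n_1}a_{n_r}, all a_{n_i} are nonzero, and p^u > |a_{n_1}| + ... + |a_{n_r}|. Then f is irreducible over Z. -/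
open Polynomial

/-!
Every complex root `z` of `f` satisfies `|z| > 1`: otherwise `p^u = |∑ aᵢ zⁿⁱ| ≤ ∑ |aᵢ|`.
Hence every factor `g` of positive degree has `|g(0)| = |lc g| ∏ |roots| > 1`, and a constant
non-unit factor has `|g(0)| > 1` trivially. As `g(0) h(0) = ±p^u`, a factorization `f = g h`
into non-units forces `p ∣ g(0)` and `p ∣ h(0)`, so `p` divides the linear coefficient
`g(0) h'(0) + g'(0) h(0) = a_{n_1}`, a contradiction.
-/

theorem Prime.dvd_of_dvd_pow_of_not_isUnit {M : Type*} [CommMonoidWithZero M] [IsCancelMulZero M]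
    {p q : M} (hp : Prime p) {u : ℕ} (hq : q ∣ p ^ u) (hqu : ¬IsUnit q) : p ∣ q := by
  obtain ⟨_ | i, -, hassoc⟩ := (dvd_prime_pow hp u).1 hq
  · exact absurd (associated_one_iff_isUnit.1 (by simpa using hassoc)) hqu
  · exact (dvd_pow_self p i.succ_ne_zero).trans hassoc.symm.dvd

theorem irreducible_of_coeff_zero_eq_unit_mul_prime_pow {R : Type*} [CommRing R] [IsDomain R]
    {f : R[X]} {p ε : R} {u : ℕ} (hp : Prime p) (hε : IsUnit ε) (h0 : f.coeff 0 = ε * p ^ u)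
    (h1 : ¬p ∣ f.coeff 1) (hfactor : ∀ g, g ∣ f → 0 < g.natDegree → ¬IsUnit (g.coeff 0)) :
    Irreducible f := by
  have hp_dvd : ∀ g h, f = g * h → ¬IsUnit g → p ∣ g.coeff 0 := by
    intro g h hgh hg
    have hdvd : g.coeff 0 ∣ ε * p ^ u := ⟨h.coeff 0, by rw [← h0, hgh, mul_coeff_zero]⟩
    refine hp.dvd_of_dvd_pow_of_not_isUnit (hε.dvd_mul_left.1 hdvd) ?_
    rcases Nat.eq_zero_or_pos g.natDegree with hg0 | hgpos
    · rwa [eq_C_of_natDegree_eq_zero hg0, isUnit_C] at hg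
    · exact hfactor g ⟨h, hgh⟩ hgpos
  refine ⟨fun hf => h1 ?_, fun g h hgh => ?_⟩
  · obtain ⟨c, -, rfl⟩ := Polynomial.isUnit_iff.1 hf
    simp
  by_contra! ⟨hg, hh⟩
  exact h1 (by
    rw [hgh, mul_coeff_one]
    exact dvd_add ((hp_dvd g h hgh hg).mul_right _)
      ((hp_dvd h g (hgh.trans (mul_comm g h)) hh).mul_left _))

theorem one_lt_norm_of_add_sum_mul_pow_eq_zero {K ι : Type*} [NormedField K] {s : Finset ι}
    {c z : K} {b : ι → K} {e : ι → ℕ} (hdom : ∑ i ∈ s, ‖b i‖ < ‖c‖)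
    (hz : c + ∑ i ∈ s, b i * z ^ e i = 0) : 1 < ‖z‖ := by
  by_contra! hz1
  have : ‖c‖ ≤ ∑ i ∈ s, ‖b i‖ :=
    calc ‖c‖ = ‖∑ i ∈ s, b i * z ^ e i‖ := by rw [eq_neg_of_add_eq_zero_left hz, norm_neg]
      _ ≤ ∑ i ∈ s, ‖b i‖ * ‖z‖ ^ e i := by
        simpa only [norm_mul, norm_pow] using norm_sum_le s fun i => b i * z ^ e i
      _ ≤ ∑ i ∈ s, ‖b i‖ := by
        gcongr with i
        exact mul_le_of_le_one_right (norm_nonneg _) (pow_le_one₀ (norm_nonneg z) hz1)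
  exact this.not_gt hdom

theorem norm_leadingCoeff_lt_norm_coeff_zero {g : ℂ[X]} (hg : 0 < g.natDegree)
    (hroots : ∀ z ∈ g.roots, 1 < ‖z‖) : ‖g.leadingCoeff‖ < ‖g.coeff 0‖ := by
  have hsplit : Splits g := IsAlgClosed.splits g
  have hne : g.roots ≠ 0 := by
    rw [← Multiset.card_pos, ← hsplit.natDegree_eq_card_roots]; exact hg
  have hlc : 0 < ‖g.leadingCoeff‖ := by
    rw [norm_pos_iff, leadingCoeff_ne_zero]; rintro rfl; simp at hg
  have hprod : 1 < (g.roots.map (‖·‖)).prod := by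
    simpa using Multiset.prod_map_lt_prod_map hne (fun _ => (1 : ℝ)) (‖·‖)
      (fun _ _ => one_pos) hroots
  have hnorm : ‖g.roots.prod‖ = (g.roots.map (‖·‖)).prod := map_multiset_prod normHom g.roots
  rw [hsplit.coeff_zero_eq_leadingCoeff_mul_prod_roots, norm_mul, norm_mul, norm_pow, norm_neg,
    norm_one, one_pow, one_mul, hnorm]
  exact lt_mul_of_one_lt_right hlc hprod

theorem one_lt_abs_coeff_zero_of_one_lt_norm_roots {g : ℤ[X]} (hg : 0 < g.natDegree)
    (hroots : ∀ z : ℂ, aeval z g = 0 → 1 < ‖z‖) : 1 < |g.coeff 0| := by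
  set G := g.map (algebraMap ℤ ℂ)
  have hinj : Function.Injective (algebraMap ℤ ℂ) := (algebraMap ℤ ℂ).injective_int
  have hG : ‖G.leadingCoeff‖ < ‖G.coeff 0‖ := by
    refine norm_leadingCoeff_lt_norm_coeff_zero (by rwa [natDegree_map_eq_of_injective hinj]) ?_
    intro z hz
    exact hroots z (by rw [← eval_map_algebraMap]; exact (mem_roots'.1 hz).2)
  have hlc : 1 ≤ |g.leadingCoeff| :=
    Int.one_le_abs (leadingCoeff_ne_zero.2 (by rintro rfl; simp at hg))
  rw [leadingCoeff_map_of_injective hinj, coeff_map] at hG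
  simp only [eq_intCast, Complex.norm_intCast] at hG
  exact_mod_cast (show (1 : ℝ) ≤ |(g.leadingCoeff : ℝ)| by exact_mod_cast hlc).trans_lt hG

theorem coeff_sum_C_mul_X_pow_of_injective {R ι : Type*} [Semiring R] [Fintype ι] {a : ι → R}
    {n : ι → ℕ} (hn : Function.Injective n) (j : ι) :
    (∑ i, C (a i) * X ^ n i).coeff (n j) = a j := by
  simp only [finsetSum_coeff, coeff_C_mul_X_pow]
  rw [Finset.sum_eq_single j (fun i _ hij => if_neg (hn.ne hij).symm) (by simp), if_pos rfl]

theorem coeff_zero_sum_C_mul_X_pow {R ι : Type*} [Semiring R] [Fintype ι] {a : ι → R}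
    {n : ι → ℕ} (hn : ∀ i, n i ≠ 0) : (∑ i, C (a i) * X ^ n i).coeff 0 = 0 := by
  simp only [finsetSum_coeff, coeff_C_mul_X_pow]
  exact Finset.sum_eq_zero fun i _ => if_neg (hn i).symm

theorem stmt_7_general (p u : ℕ) (hp : p.Prime) (ε : ℤ) (hε : ε = 1 ∨ ε = -1)
    (r : ℕ) (n : Fin (r + 1) → ℕ) (a : Fin (r + 1) → ℤ)
    (hmono : StrictMono n) (hn1 : n 0 = 1)
    (hpa : ¬ (p : ℤ) ∣ a 0 * a (Fin.last r))
    (hdom : ((p : ℤ)) ^ u > ∑ i, |a i|)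
    (f : ℤ[X]) (hf : f = C (ε * (p : ℤ) ^ u) + ∑ i, C (a i) * X ^ (n i)) :
    Irreducible f := by
  have hn_ne_zero (i : Fin (r + 1)) : n i ≠ 0 :=
    Nat.one_le_iff_ne_zero.1 (hn1 ▸ hmono.monotone (Fin.zero_le i))
  have hε_unit : IsUnit ε := by rcases hε with rfl | rfl <;> simp
  refine irreducible_of_coeff_zero_eq_unit_mul_prime_pow (u := u) (Nat.prime_iff_prime_int.1 hp)
    hε_unit ?_ ?_ fun g hg hg_pos => ?_
  · rw [hf, coeff_add, coeff_C_zero, coeff_zero_sum_C_mul_X_pow hn_ne_zero, add_zero]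
  · have hcoeff_one := coeff_sum_C_mul_X_pow_of_injective (a := a) hmono.injective 0
    rw [hn1] at hcoeff_one
    rw [hf, coeff_add, coeff_C_of_ne_zero one_ne_zero, zero_add, hcoeff_one]
    exact fun h => hpa (h.mul_right _)
  rw [Int.isUnit_iff_abs_eq]
  refine (one_lt_abs_coeff_zero_of_one_lt_norm_roots hg_pos fun z hz => ?_).ne'
  have hfz := aeval_eq_zero_of_dvd_aeval_eq_zero hg hz
  refine one_lt_norm_of_add_sum_mul_pow_eq_zero (c := ((ε * p ^ u : ℤ) : ℂ))
    (b := fun i => (a i : ℂ)) (e := n) ?_ (by simpa [hf] using hfz)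
  have habs : |ε * (p : ℤ) ^ u| = (p : ℤ) ^ u := by
    rw [abs_mul, Int.isUnit_iff_abs_eq.1 hε_unit, one_mul, abs_of_nonneg (by positivity)]
  simp only [Complex.norm_intCast]
  exact_mod_cast habs ▸ hdom

theorem stmt_7 (p u : ℕ) (hp : p.Prime) (hu : 2 ≤ u) (ε : ℤ) (hε : ε = 1 ∨ ε = -1)
    (r : ℕ) (n : Fin (r + 1) → ℕ) (a : Fin (r + 1) → ℤ)
    (hmono : StrictMono n) (hn1 : n 0 = 1)
    (hpa : ¬ (p : ℤ) ∣ a 0 * a (Fin.last r))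
    (ha : ∀ i, a i ≠ 0)
    (hdom : ((p : ℤ)) ^ u > ∑ i, |a i|)
    (f : ℤ[X]) (hf : f = C (ε * (p : ℤ) ^ u) + ∑ i, C (a i) * X ^ (n i)) :
    Irreducible f :=
  stmt_7_general p u hp ε hε r n a hmono hn1 hpa hdom f hf
end
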